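/- arXiv:2108.12733 — 2 statements merged into one kernel-verified Lean document; each statement's English description precedes it below -/
import Mathlib

section
/- Let p be an odd prime and let i be a positive even integer with gcd(i,p) = 1, gcd(i−1,p) = 1, i ≢ 0 (mod p−1) and i ≢ 2 (mod p−1). Then Mirimanoff's congruence holds: Σ_{r=1}^{(p−1)/2} r^{i−1} ≡ (1/2^i − 1)·(2·B_i/i) (mod p²). -/
section padicHelpers
open Finset Polynomial
variable {p : ℕ} [hp : Fact p.Prime]

lemma norm_q_le_one_iff_den (t : ℚ) : ‖(t : ℚ_[p])‖ ≤ 1 ↔ ¬ (p : ℕ) ∣ t.den := by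
  constructor
  · intro h hdvd
    have hnum : ¬ ((p : ℤ) ∣ t.num) := by
      intro hn
      have h1 : (p : ℕ) ∣ t.num.natAbs := Int.natCast_dvd_natCast.mp (by
        simpa using Int.dvd_natAbs.mpr hn)
      have := Nat.dvd_gcd h1 hdvd
      rw [Nat.Coprime.gcd_eq_one t.reduced] at this
      exact Nat.Prime.one_lt hp.out |>.ne' (Nat.dvd_one.mp this)
    have heq : (t : ℚ_[p]) = (t.num : ℚ_[p]) / (t.den : ℚ_[p]) := by
      conv_lhs => rw [← Rat.num_div_den t]
      push_cast
      ring
    have hden0 : (t.den : ℚ_[p]) ≠ 0 := by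
      exact_mod_cast Nat.cast_ne_zero.mpr t.den_nz
    have hd : ‖((t.den : ℤ) : ℚ_[p])‖ < 1 :=
      Padic.norm_intCast_lt_one_iff.mpr (Int.natCast_dvd_natCast.mpr hdvd)
    have hn1 : ‖((t.num : ℤ) : ℚ_[p])‖ = 1 := by
      rcases lt_or_eq_of_le (Padic.norm_int_le_one (p:=p) t.num) with h' | h'
      · exact absurd (Padic.norm_intCast_lt_one_iff.mp h') hnum
      · exact h'
    rw [heq, norm_div] at h
    push_cast at hn1 hd
    rw [hn1] at h
    have hdpos : (0:ℝ) < ‖(t.den : ℚ_[p])‖ := norm_pos_iff.mpr hden0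
    have : (1:ℝ) < 1 / ‖(t.den : ℚ_[p])‖ := (one_lt_div hdpos).mpr hd
    linarith
  · exact fun h => Padic.norm_rat_le_one h

lemma norm_sum_le_of_le' {α : Type*} {s : Finset α} {f : α → ℚ_[p]} {c : ℝ} (hc : 0 ≤ c)
    (h : ∀ a ∈ s, ‖f a‖ ≤ c) : ‖∑ a ∈ s, f a‖ ≤ c := by
  classical
  induction s using Finset.induction_on with
  | empty => simpa using hc
  | @insert a s' hx ih =>
    rw [Finset.sum_insert hx]
    refine le_trans (Padic.nonarchimedean _ _) (max_le (h a (mem_insert_self a s')) ?_)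
    exact ih fun b hb => h b (mem_insert_of_mem hb)

end padicHelpers

open Finset

section fermat
variable {p : ℕ} [hp : Fact p.Prime]

lemma univ_sum_pow_eq_zero (n : ℕ) (hn : n ≠ 0) (h : ¬ (p - 1) ∣ n) :
    ∑ x : ZMod p, x ^ n = 0 := by
  classical
  let φ : (ZMod p)ˣ ↪ ZMod p := ⟨fun x ↦ x, Units.val_injective⟩
  have huniv : univ.map φ = univ \ {0} := by
    ext x
    simp only [mem_map, mem_univ, Function.Embedding.coeFn_mk, true_and, mem_sdiff,
      mem_singleton, φ]
    exact isUnit_iff_ne_zero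
  calc
    ∑ x : ZMod p, x ^ n = ∑ x ∈ univ \ {(0 : ZMod p)}, x ^ n := by
      rw [← sum_sdiff ({0} : Finset (ZMod p)).subset_univ, sum_singleton, zero_pow hn, add_zero]
    _ = ∑ x : (ZMod p)ˣ, (x ^ n : ZMod p) := by simp [φ, ← huniv, univ.sum_map φ]
    _ = 0 := by
      rw [FiniteField.sum_pow_units (ZMod p) n, if_neg]
      rwa [ZMod.card p]

lemma fermat_sum_dvd (n : ℕ) (hn : n ≠ 0) (h : ¬ (p - 1) ∣ n) :
    (p : ℤ) ∣ ∑ k ∈ range p, (k : ℤ) ^ n := by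
  have key : ((∑ k ∈ range p, (k : ℤ) ^ n : ℤ) : ZMod p) = 0 := by
    push_cast
    have e1 : ∑ k ∈ range p, ((k : ZMod p)) ^ n = ∑ x : ZMod p, x ^ n := by
      refine Finset.sum_bij' (fun k _ => (k : ZMod p)) (fun x _ => x.val) ?_ ?_ ?_ ?_ ?_
      · intros; exact mem_univ _
      · intro x _; exact mem_range.mpr (ZMod.val_lt x)
      · intro k hk; exact ZMod.val_cast_of_lt (mem_range.mp hk)
      · intro x _; exact ZMod.natCast_rightInverse x
      · intros; rfl
    rw [e1, univ_sum_pow_eq_zero n hn h]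
  exact_mod_cast (ZMod.intCast_zmod_eq_zero_iff_dvd _ p).mp key

end fermat

open Finset

section vonStaudt
variable {p : ℕ} [hp : Fact p.Prime]

lemma aux_lt_three_pow {d : ℕ} (hd : 1 ≤ d) : d + 1 < 3 ^ d := by
  induction d with
  | zero => omega
  | succ d ih =>
    rcases Nat.eq_or_lt_of_le hd with h | h
    · simp [← h]
    · have h3 : 3 ^ d < 3 ^ (d+1) := by
        have : (3:ℕ)^d ≥ 1 := Nat.one_le_pow _ _ (by norm_num)
        calc 3^d < 3^d + 2 * 3^d := by omega
          _ = 3^(d+1) := by ring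
      have := ih (by omega)
      omega

omit hp in
lemma val_succ_le (hp3 : 3 ≤ p) {d : ℕ} (hd : 1 ≤ d) :
    padicValNat p (d + 1) + 1 ≤ d := by
  set v := padicValNat p (d + 1) with hv
  by_contra hcon
  have hvd : d ≤ v := by omega
  have h1 : p ^ v ∣ d + 1 := pow_padicValNat_dvd
  have h2 : p ^ v ≤ d + 1 := Nat.le_of_dvd (by omega) h1
  have h3 : (3:ℕ) ^ d ≤ p ^ v :=
    le_trans (Nat.pow_le_pow_left hp3 d) (Nat.pow_le_pow_right (by omega) hvd)
  have := aux_lt_three_pow hd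
  omega

lemma norm_natCast_inv_le (hp3 : 3 ≤ p) {d : ℕ} (hd : 1 ≤ d) :
    ‖(((d + 1 : ℕ) : ℚ_[p]))⁻¹‖ ≤ (p:ℝ) ^ ((d : ℤ) - 1) := by
  have hd0 : ((d + 1 : ℕ) : ℚ_[p]) ≠ 0 := by
    simp only [ne_eq, Nat.cast_eq_zero]; omega
  rw [norm_inv, Padic.norm_eq_zpow_neg_valuation hd0, Padic.valuation_natCast, ← zpow_neg, neg_neg]
  have hb : (1:ℝ) < (p:ℝ) := by exact_mod_cast hp.out.one_lt
  apply zpow_le_zpow_right₀ (le_of_lt hb)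
  have := val_succ_le hp3 hd
  omega

omit hp in
lemma choose_id (n j : ℕ) (hj : j ≤ n) :
    (n + 1) * n.choose j = (n + 1 - j) * (n + 1).choose j := by
  have h1 : n.choose j = n.choose (n - j) := (Nat.choose_symm hj).symm
  have h2 : (n+1) * n.choose (n - j) = (n+1).choose ((n-j)+1) * ((n-j)+1) :=
    Nat.add_one_mul_choose_eq n (n - j)
  have h3 : (n - j) + 1 = n + 1 - j := by omega
  have h4 : (n+1).choose (n+1-j) = (n+1).choose j := by
    rw [← Nat.choose_symm (by omega : j ≤ n + 1)]
  rw [h1, h2, h3, h4]; ring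

/-- von Staudt–Clausen type bound for odd `p`. -/
lemma norm_pmul_bernoulli (hp3 : 3 ≤ p) : ∀ n : ℕ,
    ‖((bernoulli n : ℚ) : ℚ_[p]) * (p : ℚ_[p])‖ ≤ 1 ∧
      (¬ (p - 1) ∣ n → ‖((bernoulli n : ℚ) : ℚ_[p]) * (p : ℚ_[p])‖ ≤ (p:ℝ)⁻¹) := by
  intro n
  induction n using Nat.strong_induction_on with
  | _ n ih =>
  rcases Nat.eq_zero_or_pos n with rfl | hn
  · have : ‖((bernoulli 0 : ℚ) : ℚ_[p]) * (p : ℚ_[p])‖ = (p:ℝ)⁻¹ := by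
      simp [Padic.norm_p]
    constructor
    · rw [this]; exact inv_le_one_of_one_le₀ (by exact_mod_cast hp.out.one_le)
    · intro _; rw [this]
  -- main case n ≥ 1
  have hq1 : ((n:ℚ) + 1) ≠ 0 := by positivity
  have key : (bernoulli n : ℚ) * p = (∑ k ∈ range p, (k:ℚ)^n)
      - ∑ j ∈ range n, ((bernoulli j : ℚ) * p) *
          ((n.choose j : ℚ) * (p:ℚ)^(n-j) / (((n - j + 1 : ℕ)) : ℚ)) := by
    have h1 := sum_range_pow p n
    rw [Finset.sum_range_succ] at h1
    have hlast : (bernoulli n : ℚ) * ((n+1).choose n : ℚ) * (p:ℚ)^(n+1-n) / ((n:ℚ)+1)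
        = (bernoulli n : ℚ) * p := by
      rw [Nat.choose_succ_self_right]
      have : n + 1 - n = 1 := by omega
      rw [this]
      field_simp
      push_cast; ring
    rw [hlast] at h1
    have hterm : ∀ j ∈ range n,
        (bernoulli j : ℚ) * (((n+1).choose j : ℚ)) * (p:ℚ)^(n+1-j) / ((n:ℚ)+1)
        = ((bernoulli j : ℚ) * p) * ((n.choose j : ℚ) * (p:ℚ)^(n-j) / (((n - j + 1 : ℕ)) : ℚ)) := by
      intro j hj
      have hjn : j ≤ n := le_of_lt (mem_range.mp hj)
      have hje : (j:ℚ) ≤ (n:ℚ) := by exact_mod_cast hjn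
      have hpow : (p:ℚ)^(n+1-j) = (p:ℚ) * (p:ℚ)^(n-j) := by
        have : n + 1 - j = (n - j) + 1 := by omega
        rw [this, pow_succ]; ring
      have hden : (((n - j + 1 : ℕ)) : ℚ) = (n:ℚ) - j + 1 := by
        push_cast [Nat.cast_sub hjn]; ring
      have hd0 : ((n:ℚ) - j + 1) ≠ 0 := by intro hcon; nlinarith
      have hcast : ((n:ℚ) + 1) * (n.choose j : ℚ) = ((n:ℚ) - j + 1) * (((n+1).choose j : ℚ)) := by
        have h := choose_id n j hjn
        have h' : (((n+1) * n.choose j : ℕ) : ℚ) = (((n+1-j) * (n+1).choose j : ℕ) : ℚ) := by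
          rw [h]
        push_cast [Nat.cast_sub (show j ≤ n+1 by omega)] at h'
        linarith
      have hC : (n.choose j : ℚ) = ((n:ℚ) - j + 1) * (((n+1).choose j : ℚ)) / ((n:ℚ)+1) := by
        field_simp
        linarith
      rw [hden, hC, hpow]
      field_simp
    rw [Finset.sum_congr rfl hterm] at h1
    linarith
  -- cast to Q_p
  have keyQ : ((bernoulli n : ℚ) : ℚ_[p]) * (p : ℚ_[p]) =
      ((∑ k ∈ range p, (k:ℤ)^n : ℤ) : ℚ_[p])
      - ∑ j ∈ range n, (((bernoulli j : ℚ) : ℚ_[p]) * (p : ℚ_[p])) *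
          ((n.choose j : ℚ_[p]) * (p:ℚ_[p])^(n-j) / ((((n-j+1 : ℕ)) : ℚ_[p]))) := by
    have h := congrArg (fun x : ℚ => (x : ℚ_[p])) key
    push_cast at h ⊢
    exact h
  -- norm bound of the sum part
  have hsumbound : ‖∑ j ∈ range n, (((bernoulli j : ℚ) : ℚ_[p]) * (p : ℚ_[p])) *
      ((n.choose j : ℚ_[p]) * (p:ℚ_[p])^(n-j) / ((((n-j+1 : ℕ)) : ℚ_[p])))‖ ≤ (p:ℝ)⁻¹ := by
    apply norm_sum_le_of_le' (by positivity)
    intro j hj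
    have hjn : j < n := mem_range.mp hj
    have hd1 : 1 ≤ n - j := by omega
    have hBj : ‖((bernoulli j : ℚ) : ℚ_[p]) * (p : ℚ_[p])‖ ≤ 1 := (ih j hjn).1
    have hch : ‖(n.choose j : ℚ_[p])‖ ≤ 1 := by
      have := Padic.norm_int_le_one (p := p) (n.choose j : ℤ)
      push_cast at this; exact this
    have hppow : ‖(p:ℚ_[p])^(n-j)‖ = (p:ℝ)^(-((n-j : ℕ) : ℤ)) := by
      rw [norm_pow, Padic.norm_p, inv_pow, ← zpow_natCast, ← zpow_neg]
    have hinv : ‖((((n-j+1 : ℕ)) : ℚ_[p]))⁻¹‖ ≤ (p:ℝ) ^ (((n - j : ℕ) : ℤ) - 1) :=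
      norm_natCast_inv_le (p := p) hp3 hd1
    have hy : ‖(n.choose j : ℚ_[p]) * (p:ℚ_[p])^(n-j) / ((((n-j+1 : ℕ)) : ℚ_[p]))‖ ≤ (p:ℝ)⁻¹ := by
      rw [div_eq_mul_inv, norm_mul, norm_mul, hppow]
      calc ‖(n.choose j : ℚ_[p])‖ * (p:ℝ)^(-((n-j : ℕ) : ℤ)) * ‖((((n-j+1 : ℕ)) : ℚ_[p]))⁻¹‖
          ≤ 1 * (p:ℝ)^(-((n-j : ℕ) : ℤ)) * ((p:ℝ) ^ (((n - j : ℕ) : ℤ) - 1)) := by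
            apply mul_le_mul _ hinv (by positivity) (by positivity)
            apply mul_le_mul hch le_rfl (by positivity) (by norm_num)
        _ = (p:ℝ) ^ (-(1:ℤ)) := by
            rw [one_mul, ← zpow_add₀ (by positivity : (p:ℝ) ≠ 0)]
            congr 1
            ring
        _ = (p:ℝ)⁻¹ := by simp
    calc ‖(((bernoulli j : ℚ) : ℚ_[p]) * (p : ℚ_[p])) *
        ((n.choose j : ℚ_[p]) * (p:ℚ_[p])^(n-j) / ((((n-j+1 : ℕ)) : ℚ_[p])))‖
        = ‖((bernoulli j : ℚ) : ℚ_[p]) * (p : ℚ_[p])‖ *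
          ‖(n.choose j : ℚ_[p]) * (p:ℚ_[p])^(n-j) / ((((n-j+1 : ℕ)) : ℚ_[p]))‖ := norm_mul _ _
      _ ≤ 1 * (p:ℝ)⁻¹ := by
          apply mul_le_mul hBj hy (by positivity) (by norm_num)
      _ = (p:ℝ)⁻¹ := one_mul _
  have hmax : ‖((bernoulli n : ℚ) : ℚ_[p]) * (p : ℚ_[p])‖ ≤
      max ‖((∑ k ∈ range p, (k:ℤ)^n : ℤ) : ℚ_[p])‖
        ‖∑ j ∈ range n, (((bernoulli j : ℚ) : ℚ_[p]) * (p : ℚ_[p])) *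
          ((n.choose j : ℚ_[p]) * (p:ℚ_[p])^(n-j) / ((((n-j+1 : ℕ)) : ℚ_[p])))‖ := by
    rw [keyQ, sub_eq_add_neg]
    refine le_trans (Padic.nonarchimedean _ _) ?_
    rw [norm_neg]
  constructor
  · refine le_trans hmax (max_le (Padic.norm_int_le_one _) ?_)
    exact le_trans hsumbound (inv_le_one_of_one_le₀ (by exact_mod_cast hp.out.one_le))
  · intro hnd
    refine le_trans hmax (max_le ?_ hsumbound)
    have hdvd := fermat_sum_dvd (p := p) n (by omega) hnd
    have := (Padic.norm_int_le_pow_iff_dvd (p := p) (∑ k ∈ range p, (k:ℤ)^n) 1).mpr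
      (by simpa using hdvd)
    simpa using this

lemma norm_bernoulli_le_p (hp3 : 3 ≤ p) (n : ℕ) :
    ‖((bernoulli n : ℚ) : ℚ_[p])‖ ≤ (p:ℝ) := by
  have h := (norm_pmul_bernoulli (p := p) hp3 n).1
  rw [norm_mul, Padic.norm_p] at h
  have hppos : (0:ℝ) < (p:ℝ) := by exact_mod_cast hp.out.pos
  calc ‖((bernoulli n : ℚ) : ℚ_[p])‖ = (‖((bernoulli n : ℚ) : ℚ_[p])‖ * (p:ℝ)⁻¹) * p := by
        field_simp
    _ ≤ 1 * p := by apply mul_le_mul_of_nonneg_right h (le_of_lt hppos)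
    _ = p := one_mul _

lemma norm_bernoulli_le_one (hp3 : 3 ≤ p) {n : ℕ} (hnd : ¬ (p - 1) ∣ n) :
    ‖((bernoulli n : ℚ) : ℚ_[p])‖ ≤ 1 := by
  have h := (norm_pmul_bernoulli (p := p) hp3 n).2 hnd
  rw [norm_mul, Padic.norm_p] at h
  have hppos : (0:ℝ) < (p:ℝ) := by exact_mod_cast hp.out.pos
  have h2 : ‖((bernoulli n : ℚ) : ℚ_[p])‖ * ((p:ℝ)⁻¹ * p) ≤ (p:ℝ)⁻¹ * p := by
    rw [← mul_assoc]; exact mul_le_mul_of_nonneg_right h (le_of_lt hppos)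
  rw [inv_mul_cancel₀ (ne_of_gt hppos), mul_one] at h2
  exact h2

end vonStaudt

section bernPoly
open Finset Polynomial

lemma choose_triple (n i k : ℕ) (h : i + k ≤ n) :
    n.choose i * (n - i).choose k = n.choose k * (n - k).choose i := by
  have h1 := Nat.choose_mul (n := n) (show i ≤ i + k by omega)
  have h2 := Nat.choose_mul (n := n) (show k ≤ i + k by omega)
  have e1 : i + k - i = k := by omega
  have e2 : i + k - k = i := by omega
  rw [e1] at h1
  rw [e2] at h2
  have hsymm : (i + k).choose i = (i + k).choose k := by
    rw [← Nat.choose_symm (show k ≤ i + k by omega), e2]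
  rw [hsymm] at h1
  omega

lemma natDegree_bernoulli_le (n : ℕ) : (Polynomial.bernoulli n).natDegree ≤ n := by
  rw [Polynomial.bernoulli]
  apply Polynomial.natDegree_sum_le_of_forall_le
  intro i _
  exact le_trans (Polynomial.natDegree_monomial_le _) (Nat.sub_le n i)

lemma hasseDeriv_bernoulli (n k : ℕ) (hk : k ≤ n) :
    Polynomial.hasseDeriv k (Polynomial.bernoulli n)
      = Polynomial.C ((n.choose k : ℚ)) * Polynomial.bernoulli (n - k) := by
  rw [Polynomial.bernoulli, Polynomial.bernoulli, map_sum, Finset.mul_sum]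
  simp_rw [Polynomial.hasseDeriv_monomial, Polynomial.C_mul_monomial]
  rw [← Finset.sum_subset (Finset.range_subset_range.mpr (show n - k + 1 ≤ n + 1 by omega))]
  · apply Finset.sum_congr rfl
    intro i hi
    have hik : i ≤ n - k := Nat.lt_succ_iff.mp (mem_range.mp hi)
    have hdeg : n - i - k = n - k - i := by omega
    rw [hdeg]
    congr 1
    have htriple := choose_triple n i k (by omega)
    have hQ : ((n - i).choose k : ℚ) * ((n.choose i : ℚ)) = (n.choose k : ℚ) * ((n - k).choose i : ℚ) := by
      exact_mod_cast congrArg (fun x : ℕ => (x : ℚ))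
        (by rw [mul_comm]; exact htriple :
          (n - i).choose k * n.choose i = n.choose k * (n - k).choose i)
    linear_combination _root_.bernoulli i * hQ
  · intro i hi hni
    have : n - i < k := by
      simp only [mem_range] at hi hni
      omega
    rw [Nat.choose_eq_zero_of_lt this]
    simp

lemma bernoulli_eval_add (n : ℕ) (x y : ℚ) :
    (Polynomial.bernoulli n).eval (x + y) =
      ∑ k ∈ Finset.range (n + 1), (n.choose k : ℚ) * (Polynomial.bernoulli (n - k)).eval x * y ^ k := by
  have h1 : (Polynomial.bernoulli n).eval (x + y) =
      (Polynomial.taylor x (Polynomial.bernoulli n)).eval y := by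
    rw [Polynomial.taylor_eval, add_comm]
  have hdeg : (Polynomial.taylor x (Polynomial.bernoulli n)).natDegree < n + 1 := by
    rw [Polynomial.natDegree_taylor]
    exact Nat.lt_succ_of_le (natDegree_bernoulli_le n)
  rw [h1, Polynomial.eval_eq_sum_range' hdeg]
  apply Finset.sum_congr rfl
  intro k hk
  have hkn : k ≤ n := Nat.lt_succ_iff.mp (mem_range.mp hk)
  rw [Polynomial.taylor_coeff, hasseDeriv_bernoulli n k hkn, Polynomial.eval_mul,
    Polynomial.eval_C]

/-- `Bₙ(1/2)` as a rational number. -/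
noncomputable def bhalf (n : ℕ) : ℚ := (2 * (2:ℚ)⁻¹ ^ n - 1) * _root_.bernoulli n

lemma bhalf_odd_eq_zero {n : ℕ} (hn : Odd n) : bhalf n = 0 := by
  rcases Nat.lt_or_ge n 2 with h | h
  · interval_cases n
    · simp at hn
    · norm_num [bhalf, _root_.bernoulli_one]
  · rw [bhalf, bernoulli_eq_bernoulli'_of_ne_one (by omega),
      bernoulli'_eq_zero_of_odd hn (by omega), mul_zero]

lemma eval_two_bernoulli (m : ℕ) :
    (Polynomial.bernoulli m).eval (2 : ℚ) = bernoulli' m + m := by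
  have h := Polynomial.bernoulli_eval_one_add m 1
  norm_num at h
  exact h

lemma bernoulli_poly_eval_expand (m : ℕ) (x : ℚ) :
    (Polynomial.bernoulli m).eval x
      = ∑ i ∈ range (m + 1), _root_.bernoulli i * (m.choose i : ℚ) * x ^ (m - i) := by
  rw [Polynomial.bernoulli, Polynomial.eval_finset_sum]
  simp [Polynomial.eval_monomial]

lemma bernoulli_eval_half (n : ℕ) :
    (Polynomial.bernoulli n).eval ((2:ℚ)⁻¹) = bhalf n := by
  induction n using Nat.strong_induction_on with
  | _ n ih =>
  rcases Nat.eq_zero_or_pos n with rfl | hn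
  · norm_num [bhalf]
  -- the recursion satisfied by eval (1/2)
  have hrec : ∑ k ∈ range (n + 1), ((n+1).choose k : ℚ) * (Polynomial.bernoulli k).eval ((2:ℚ)⁻¹)
      = ((n:ℚ) + 1) * (2:ℚ)⁻¹ ^ n := by
    have h := congrArg (fun q : Polynomial ℚ => q.eval ((2:ℚ)⁻¹)) (Polynomial.sum_bernoulli n)
    simp only [Polynomial.eval_finset_sum, Polynomial.eval_smul, smul_eq_mul,
      Polynomial.eval_monomial] at h
    exact_mod_cast h
  -- the recursion satisfied by bhalf
  have hA : ∑ k ∈ range (n + 2), ((n+1).choose k : ℚ) * _root_.bernoulli k * (2:ℚ)⁻¹ ^ k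
      = (2:ℚ)⁻¹ ^ (n+1) * ((Polynomial.bernoulli (n+1)).eval 2) := by
    rw [bernoulli_poly_eval_expand (n+1) 2, Finset.mul_sum]
    apply Finset.sum_congr rfl
    intro k hk
    have hkn : k ≤ n + 1 := Nat.lt_succ_iff.mp (mem_range.mp hk)
    have hsplit : (2:ℚ)⁻¹ ^ k = (2:ℚ)⁻¹ ^ (n+1) * 2 ^ (n + 1 - k) := by
      have : (2:ℚ)⁻¹ ^ k * 2 ^ k = 1 := by
        rw [← mul_pow]; norm_num
      have h2 : (2:ℚ) ^ (n+1) = 2 ^ k * 2 ^ (n+1-k) := by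
        rw [← pow_add]; congr 1; omega
      field_simp
      rw [one_div, inv_pow, inv_pow, h2, mul_inv, mul_assoc, inv_mul_cancel₀ (by positivity), mul_one]
    rw [hsplit]
    ring
  have hB : ∑ k ∈ range (n + 1), ((n+1).choose k : ℚ) * _root_.bernoulli k * (2:ℚ)⁻¹ ^ k
      = ((n:ℚ) + 1) * ((2:ℚ)⁻¹) ^ (n+1) := by
    have h1 : ∑ k ∈ range (n + 1), ((n+1).choose k : ℚ) * _root_.bernoulli k * (2:ℚ)⁻¹ ^ k
        = (∑ k ∈ range (n + 2), ((n+1).choose k : ℚ) * _root_.bernoulli k * (2:ℚ)⁻¹ ^ k)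
          - _root_.bernoulli (n+1) * (2:ℚ)⁻¹ ^ (n+1) := by
      have hs := Finset.sum_range_succ
        (fun k => ((n+1).choose k : ℚ) * _root_.bernoulli k * (2:ℚ)⁻¹ ^ k) (n+1)
      rw [show n+1+1 = n+2 from rfl] at hs
      rw [hs, Nat.choose_self]
      push_cast
      ring
    rw [h1, hA, eval_two_bernoulli,
      ← bernoulli_eq_bernoulli'_of_ne_one (by omega : n + 1 ≠ 1)]
    push_cast
    ring
  have hbhalfrec : ∑ k ∈ range (n + 1), ((n+1).choose k : ℚ) * bhalf k
      = ((n:ℚ) + 1) * (2:ℚ)⁻¹ ^ n := by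
    have hexp : ∀ k, ((n+1).choose k : ℚ) * bhalf k
        = 2 * (((n+1).choose k : ℚ) * _root_.bernoulli k * (2:ℚ)⁻¹ ^ k)
          - ((n+1).choose k : ℚ) * _root_.bernoulli k := by
      intro k; rw [bhalf]; ring
    rw [Finset.sum_congr rfl (fun k _ => hexp k), Finset.sum_sub_distrib, ← Finset.mul_sum, hB,
      _root_.sum_bernoulli (n+1), if_neg (by omega : n + 1 ≠ 1)]
    ring
  -- compare, using strong induction on lower terms
  have hcomp := sub_eq_zero.mpr (hrec.trans hbhalfrec.symm)
  rw [← Finset.sum_sub_distrib] at hcomp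
  rw [Finset.sum_range_succ] at hcomp
  have hzero : ∑ k ∈ range n, (((n+1).choose k : ℚ) * (Polynomial.bernoulli k).eval ((2:ℚ)⁻¹)
      - ((n+1).choose k : ℚ) * bhalf k) = 0 := by
    apply Finset.sum_eq_zero
    intro k hk
    rw [ih k (mem_range.mp hk)]
    ring
  rw [hzero, zero_add] at hcomp
  rw [Nat.choose_succ_self_right] at hcomp
  have hne : (((n+1 : ℕ)) : ℚ) ≠ 0 := by exact_mod_cast Nat.succ_ne_zero n
  exact mul_left_cancel₀ hne (sub_eq_zero.mp hcomp)

end bernPoly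

section mainHelpers
open Finset
variable {p : ℕ} [hp : Fact p.Prime]

lemma norm_two_eq_one (hp3 : 3 ≤ p) : ‖(2 : ℚ_[p])‖ = 1 := by
  have h2 : (2 : ℚ_[p]) = ((2:ℤ) : ℚ_[p]) := by norm_num
  rw [h2]
  rcases lt_or_eq_of_le (Padic.norm_int_le_one (p := p) 2) with h | h
  · exfalso
    have := (Padic.norm_intCast_lt_one_iff (p := p) (k := 2)).mp h
    have : (p : ℤ) ≤ 2 := Int.le_of_dvd (by norm_num) this
    omega
  · exact h

lemma norm_bhalf_le (hp3 : 3 ≤ p) (n : ℕ) :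
    ‖((bhalf n : ℚ) : ℚ_[p])‖ ≤ ‖((_root_.bernoulli n : ℚ) : ℚ_[p])‖ := by
  have hcast : ((bhalf n : ℚ) : ℚ_[p])
      = ((2 * (2:ℚ_[p])⁻¹ ^ n - 1)) * ((_root_.bernoulli n : ℚ) : ℚ_[p]) := by
    rw [bhalf]; push_cast; ring
  rw [hcast, norm_mul]
  have hfac : ‖(2 * (2:ℚ_[p])⁻¹ ^ n - 1)‖ ≤ 1 := by
    have h2 : ‖(2 * (2:ℚ_[p])⁻¹ ^ n)‖ = 1 := by
      rw [norm_mul, norm_pow, norm_inv, norm_two_eq_one hp3]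
      norm_num
    have h1 : ‖(1 : ℚ_[p])‖ = 1 := norm_one
    calc ‖(2 * (2:ℚ_[p])⁻¹ ^ n - 1)‖ ≤ max ‖(2 * (2:ℚ_[p])⁻¹ ^ n)‖ ‖(1:ℚ_[p])‖ := by
          rw [sub_eq_add_neg]
          refine le_trans (Padic.nonarchimedean _ _) ?_
          rw [norm_neg]
      _ ≤ 1 := by rw [h2, h1]; norm_num
  calc ‖(2 * (2:ℚ_[p])⁻¹ ^ n - 1)‖ * ‖((_root_.bernoulli n : ℚ) : ℚ_[p])‖
      ≤ 1 * ‖((_root_.bernoulli n : ℚ) : ℚ_[p])‖ :=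
        mul_le_mul_of_nonneg_right hfac (norm_nonneg _)
    _ = _ := one_mul _

end mainHelpers


/-- `x ≡ y (mod p^r)` for rationals: `x - y = p^r * t` with the denominator of `t`
prime to `p`, i.e. the `p`-adic valuation of `x - y` is at least `r`. -/
def ratCongr (p r : ℕ) (x y : ℚ) : Prop :=
  ∃ t : ℚ, x - y = (p : ℚ) ^ r * t ∧ ¬ (p ∣ t.den)

/-- Mirimanoff's congruence `(II)_i` modulo `p²`. -/
theorem mirimanoff_congruence (p : ℕ) (hp : p.Prime) (hodd : Odd p)
    (i : ℕ) (hipos : 0 < i) (hieven : Even i)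
    (hcop : Nat.Coprime i p) (hcop' : Nat.Coprime (i - 1) p)
    (h0 : ¬ i ≡ 0 [MOD p - 1]) (h2 : ¬ i ≡ 2 [MOD p - 1]) :
    ratCongr p 2 (∑ r ∈ Finset.Icc 1 ((p - 1) / 2), (r : ℚ) ^ (i - 1))
      ((1 / 2 ^ i - 1) * (2 * bernoulli i / i)) := by
  haveI : Fact p.Prime := ⟨hp⟩
  have hpne2 : p ≠ 2 := by rintro rfl; simp [Nat.odd_iff] at hodd
  have hp3 : 3 ≤ p := by have := hp.two_le; omega
  have hi2 : 2 ≤ i := by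
    rcases hieven with ⟨j, hj⟩; omega
  have h2' : ¬ (p - 1) ∣ (i - 2) := fun hd =>
    h2 ((Nat.modEq_iff_dvd' hi2).mpr hd).symm
  have hpd : ¬ (p : ℕ) ∣ i := by
    intro hd
    have hg := Nat.dvd_gcd hd (dvd_refl p)
    rw [Nat.Coprime] at hcop
    rw [hcop] at hg
    have := Nat.le_of_dvd one_pos hg
    omega
  set m := (p - 1) / 2 with hm
  set T : ℚ := ∑ r ∈ Finset.Icc 1 m, (r : ℚ) ^ (i - 1) with hT
  set tgt : ℚ := (1 / 2 ^ i - 1) * (2 * bernoulli i / i) with htgt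
  have hiq : ((i:ℚ)) ≠ 0 := by positivity
  -- cast identity for the evaluation point
  obtain ⟨l, hl⟩ := hodd
  have hcastpt : ((m : ℕ) : ℚ) + 1 = 2⁻¹ + (p : ℚ) / 2 := by
    have hp2 : (p:ℚ) = 2 * (m:ℚ) + 1 := by exact_mod_cast (by omega : p = 2 * m + 1)
    rw [hp2]
    ring
  -- Step A : i * T = eval (m+1) - bernoulli i
  have hstepA : (i:ℚ) * T = (Polynomial.bernoulli i).eval (((m:ℕ):ℚ) + 1) - bernoulli i := by
    have h := Polynomial.bernoulli_succ_eval (m + 1) (i - 1)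
    have hsucc : (i - 1).succ = i := Nat.succ_pred_eq_of_pos hipos
    rw [hsucc] at h
    have hcoef : (((i:ℕ) - 1 : ℕ) : ℚ) + 1 = (i : ℚ) := by
      rw [Nat.cast_sub hipos]; ring
    have hr : ∑ k ∈ Finset.range (m + 1), (k:ℚ) ^ (i-1) = T := by
      rw [hT, Finset.range_eq_Ico,
        Finset.sum_eq_sum_Ico_succ_bot (Nat.succ_pos m) (fun k => (k:ℚ)^(i-1)),
        Nat.cast_zero, zero_pow (by omega : i - 1 ≠ 0), zero_add, Nat.succ_eq_add_one, Finset.Ico_add_one_right_eq_Icc]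
    rw [hcoef, hr] at h
    rw [show (((m:ℕ):ℚ) + 1) = (((m + 1 : ℕ) : ℕ) : ℚ) by push_cast; ring, h]
    ring
  -- Step B : expansion of the evaluation
  have hstepB : (Polynomial.bernoulli i).eval (((m:ℕ):ℚ) + 1)
      = ∑ k ∈ Finset.range (i + 1), (i.choose k : ℚ) * bhalf (i - k) * ((p:ℚ)/2) ^ k := by
    rw [hcastpt, bernoulli_eval_add i (2⁻¹ : ℚ) ((p:ℚ)/2)]
    apply Finset.sum_congr rfl
    intro k _
    rw [bernoulli_eval_half]
  -- Step C : i * (T - tgt) as a sum over k ≥ 1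
  have hitgt : (i:ℚ) * tgt = bhalf i - bernoulli i := by
    rw [htgt, bhalf]
    field_simp
    have h2i : ((1:ℚ)/2)^i * 2^i = 1 := by rw [← mul_pow]; norm_num
    linear_combination (-(bernoulli i * 2)) * h2i
  have hstepC : (i:ℚ) * (T - tgt)
      = ∑ k ∈ Finset.Ico 1 (i + 1), (i.choose k : ℚ) * bhalf (i - k) * ((p:ℚ)/2) ^ k := by
    have hsplit : ∑ k ∈ Finset.range (i + 1), (i.choose k : ℚ) * bhalf (i - k) * ((p:ℚ)/2) ^ k
        = bhalf i + ∑ k ∈ Finset.Ico 1 (i + 1), (i.choose k : ℚ) * bhalf (i - k) * ((p:ℚ)/2) ^ k := by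
      rw [Finset.range_eq_Ico,
        Finset.sum_eq_sum_Ico_succ_bot (Nat.succ_pos i)
          (fun k => (i.choose k : ℚ) * bhalf (i - k) * ((p:ℚ)/2) ^ k)]
      simp
    rw [mul_sub, hstepA, hitgt, hstepB, hsplit]
    ring
  -- Step D : norm bound
  have hnormterm : ∀ k ∈ Finset.Ico 1 (i + 1),
      ‖(((i.choose k : ℚ) * bhalf (i - k) * ((p:ℚ)/2) ^ k : ℚ) : ℚ_[p])‖ ≤ (p:ℝ) ^ (-2 : ℤ) := by
    intro k hk
    obtain ⟨hk1, hki⟩ := Finset.mem_Ico.mp hk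
    have hchle : ‖((i.choose k : ℚ_[p]))‖ ≤ 1 := by
      have := Padic.norm_int_le_one (p := p) (i.choose k : ℤ)
      push_cast at this; exact this
    have hpow : ‖(((p:ℚ)/2 : ℚ) : ℚ_[p]) ^ k‖ = (p:ℝ) ^ (-(k:ℤ)) := by
      have hc : (((p:ℚ)/2 : ℚ) : ℚ_[p]) = (p : ℚ_[p]) / 2 := by push_cast; ring
      rw [hc, norm_pow, norm_div, Padic.norm_p, norm_two_eq_one hp3, div_one,
        inv_pow, ← zpow_natCast, ← zpow_neg]
    have hcast : (((i.choose k : ℚ) * bhalf (i - k) * ((p:ℚ)/2) ^ k : ℚ) : ℚ_[p])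
        = ((i.choose k : ℚ_[p])) * ((bhalf (i-k) : ℚ) : ℚ_[p]) * (((p:ℚ)/2 : ℚ) : ℚ_[p]) ^ k := by
      push_cast; ring
    rw [hcast]
    rcases Nat.lt_or_ge k 3 with hk3 | hk3
    · interval_cases k
      · -- k = 1 : the coefficient bhalf (i-1) vanishes
        have hodd' : Odd (i - 1) := Nat.Even.sub_odd (by omega) hieven (by norm_num)
        rw [bhalf_odd_eq_zero hodd']
        simp [norm_zero]
      · -- k = 2
        have hb : ‖((bhalf (i-2) : ℚ) : ℚ_[p])‖ ≤ 1 :=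
          le_trans (norm_bhalf_le hp3 (i-2)) (norm_bernoulli_le_one hp3 h2')
        rw [norm_mul, norm_mul, hpow]
        calc ‖((i.choose 2 : ℚ_[p]))‖ * ‖((bhalf (i-2) : ℚ) : ℚ_[p])‖ * (p:ℝ) ^ (-(2:ℕ):ℤ)
            ≤ 1 * 1 * (p:ℝ) ^ (-(2:ℕ):ℤ) := by
              apply mul_le_mul_of_nonneg_right _ (by positivity)
              calc _ ≤ 1 * ‖((bhalf (i-2) : ℚ) : ℚ_[p])‖ :=
                    mul_le_mul_of_nonneg_right hchle (norm_nonneg _)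
                _ ≤ 1 * 1 := by simpa using hb
          _ = (p:ℝ) ^ (-2:ℤ) := by norm_num
    · -- k ≥ 3
      have hb : ‖((bhalf (i-k) : ℚ) : ℚ_[p])‖ ≤ (p:ℝ) :=
        le_trans (norm_bhalf_le hp3 (i-k)) (norm_bernoulli_le_p hp3 (i-k))
      rw [norm_mul, norm_mul, hpow]
      have hppos : (0:ℝ) < (p:ℝ) := by exact_mod_cast hp.pos
      calc ‖((i.choose k : ℚ_[p]))‖ * ‖((bhalf (i-k) : ℚ) : ℚ_[p])‖ * (p:ℝ) ^ (-(k:ℤ))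
          ≤ 1 * (p:ℝ) * (p:ℝ) ^ (-(k:ℤ)) := by
            apply mul_le_mul_of_nonneg_right _ (by positivity)
            exact mul_le_mul hchle hb (norm_nonneg _) (by norm_num)
        _ = (p:ℝ) ^ (1 + -(k:ℤ)) := by
            rw [one_mul, zpow_add₀ (ne_of_gt hppos)]
            norm_num
        _ ≤ (p:ℝ) ^ (-2:ℤ) := by
            apply zpow_le_zpow_right₀ (by exact_mod_cast hp.one_lt.le)
            omega
  have hnormsum : ‖(((i:ℚ) * (T - tgt) : ℚ) : ℚ_[p])‖ ≤ (p:ℝ) ^ (-2:ℤ) := by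
    rw [hstepC]
    rw [show ((((∑ k ∈ Finset.Ico 1 (i + 1), (i.choose k : ℚ) * bhalf (i - k) * ((p:ℚ)/2) ^ k) : ℚ)) : ℚ_[p])
      = ∑ k ∈ Finset.Ico 1 (i + 1), (((i.choose k : ℚ) * bhalf (i - k) * ((p:ℚ)/2) ^ k : ℚ) : ℚ_[p]) by push_cast; rfl]
    exact norm_sum_le_of_le' (by positivity) hnormterm
  have hnormi : ‖((i:ℚ_[p]))‖ = 1 := by
    rcases lt_or_eq_of_le (Padic.norm_int_le_one (p := p) (i:ℤ)) with h | h
    · exfalso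
      have := (Padic.norm_intCast_lt_one_iff (p := p) (k := (i:ℤ))).mp h
      exact hpd (by exact_mod_cast this)
    · push_cast at h; exact h
  have hnormD : ‖(((T - tgt) : ℚ) : ℚ_[p])‖ ≤ (p:ℝ) ^ (-2:ℤ) := by
    have hc : (((i:ℚ) * (T - tgt) : ℚ) : ℚ_[p]) = ((i:ℚ_[p])) * (((T - tgt) : ℚ) : ℚ_[p]) := by
      push_cast; ring
    rw [hc, norm_mul, hnormi, one_mul] at hnormsum
    exact hnormsum
  -- conclude
  have hpq : ((p:ℚ)) ≠ 0 := by positivity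
  refine ⟨(T - tgt) / (p:ℚ)^2, by field_simp, ?_⟩
  rw [← norm_q_le_one_iff_den (p := p)]
  have hc : (((T - tgt) / (p:ℚ)^2 : ℚ) : ℚ_[p]) = (((T - tgt) : ℚ) : ℚ_[p]) / ((p:ℚ_[p]))^2 := by
    push_cast; ring
  rw [hc, norm_div, norm_pow, Padic.norm_p]
  have hppos : (0:ℝ) < (p:ℝ) := by exact_mod_cast hp.pos
  rw [div_le_one (by positivity)]
  calc ‖(((T - tgt) : ℚ) : ℚ_[p])‖ ≤ (p:ℝ) ^ (-2:ℤ) := hnormD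
    _ = ((p:ℝ)⁻¹)^2 := by
        rw [zpow_neg, ← zpow_natCast]
        norm_num
end

section
/- Let p be an odd prime and let i be a positive odd integer with gcd(i,p) = 1, gcd(i−1,p) = 1, gcd(i−2,p) = 1, i ≢ 1 (mod p−1) and i ≢ 3 (mod p−1). Then p·B_{i−1} ≡ (1/2^{i−2})·Σ_{k=1}^{(p−1)/2} (p−2k)^{i−1} (mod p³). -/
open Finset

section Helpers

variable {p : ℕ} [hp : Fact p.Prime]

lemma norm_le_one_iff_den (x : ℚ) : padicNorm p x ≤ 1 ↔ ¬ p ∣ x.den := by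
  constructor
  · intro h hdvd
    rcases eq_or_ne x 0 with rfl | hx
    · rw [Rat.den_zero] at hdvd
      exact hp.out.one_lt.ne' (Nat.dvd_one.mp hdvd)
    · have hnum : ¬ (p : ℤ) ∣ x.num := by
        intro hd
        have h1 : p ∣ x.num.natAbs := Int.natCast_dvd.mp hd
        have hg : p ∣ Nat.gcd x.num.natAbs x.den := Nat.dvd_gcd h1 hdvd
        rw [show Nat.gcd x.num.natAbs x.den = 1 from x.reduced] at hg
        exact hp.out.one_lt.ne' (Nat.dvd_one.mp hg)
      have hv : padicValRat p x = padicValInt p x.num - padicValNat p x.den := rfl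
      have hnum0 : padicValInt p x.num = 0 := padicValInt.eq_zero_of_not_dvd hnum
      have hden0 : 1 ≤ padicValNat p x.den := by
        have hd0 : x.den ≠ 0 := x.den_nz
        exact one_le_padicValNat_of_dvd hd0 hdvd
      have hvneg : padicValRat p x ≤ -1 := by
        rw [hv, hnum0]
        omega
      have : padicNorm p x = (p : ℚ) ^ (-padicValRat p x) := by
        simp [padicNorm, hx]
      rw [this] at h
      have hp1 : (1 : ℚ) < p := by exact_mod_cast hp.out.one_lt
      have : (p : ℚ) ^ (1 : ℤ) ≤ (p : ℚ) ^ (-padicValRat p x) :=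
        zpow_le_zpow_right₀ hp1.le (by omega)
      simp only [zpow_one] at this
      nlinarith
  · intro hden
    rcases eq_or_ne x 0 with rfl | hx
    · simp [padicNorm]
    · have hden0 : padicValNat p x.den = 0 := padicValNat.eq_zero_of_not_dvd hden
      have hv : 0 ≤ padicValRat p x := by
        have : padicValRat p x = padicValInt p x.num - padicValNat p x.den := rfl
        rw [this, hden0]
        have : 0 ≤ padicValInt p x.num := by positivity
        omega
      have hnorm : padicNorm p x = (p : ℚ) ^ (-padicValRat p x) := by
        simp [padicNorm, hx]
      rw [hnorm]
      have hp1 : (1 : ℚ) < p := by exact_mod_cast hp.out.one_lt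
      calc (p:ℚ) ^ (-padicValRat p x) ≤ (p:ℚ) ^ (0 : ℤ) :=
            zpow_le_zpow_right₀ hp1.le (by omega)
        _ = 1 := zpow_zero _

lemma ratCongr_of_norm {x y : ℚ} (h : padicNorm p (x - y) ≤ ((p:ℚ)⁻¹) ^ 3) :
    ratCongr p 3 x y := by
  have hp0 : (p : ℚ) ≠ 0 := by exact_mod_cast hp.out.ne_zero
  refine ⟨(x - y) / (p : ℚ) ^ 3, by field_simp, ?_⟩
  rw [← norm_le_one_iff_den]
  have : padicNorm p ((x - y) / (p:ℚ) ^ 3) = padicNorm p (x - y) / ((p:ℚ)⁻¹)^3 := by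
    rw [padicNorm.div]
    congr 1
    have : padicNorm p ((p:ℚ)^3) = (padicNorm p p)^3 := by
      rw [show ((p:ℚ)^3) = ((p:ℚ))*(p:ℚ)*(p:ℚ) by ring, padicNorm.mul, padicNorm.mul]
      ring
    rw [this, padicNorm.padicNorm_p_of_prime]
  rw [this]
  have hpos : (0:ℚ) < ((p:ℚ)⁻¹)^3 := by positivity
  rw [div_le_one hpos]
  exact h

end Helpers

variable {p : ℕ} [hp : Fact p.Prime]

lemma two_add_le_three_pow : ∀ v : ℕ, 1 ≤ v → v + 2 ≤ 3 ^ v := by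
  intro v
  induction v with
  | zero => omega
  | succ n ih =>
    intro _
    rcases Nat.eq_zero_or_pos n with rfl | hn
    · norm_num
    · have := ih hn
      have : 3 ^ (n+1) = 3 * 3 ^ n := by ring
      omega

lemma padicValNat_le_sub_two {e : ℕ} (hp3 : 3 ≤ p) (he : 2 ≤ e) :
    padicValNat p e ≤ e - 2 := by
  set v := padicValNat p e with hv
  rcases Nat.eq_zero_or_pos v with h0 | h1
  · omega
  · have hdvd : p ^ v ∣ e := pow_padicValNat_dvd
    have hle : p ^ v ≤ e := Nat.le_of_dvd (by omega) hdvd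
    have h3 : 3 ^ v ≤ p ^ v := Nat.pow_le_pow_left hp3 v
    have := two_add_le_three_pow v h1
    omega

lemma padicNorm_pow (q : ℚ) (n : ℕ) : padicNorm p (q ^ n) = padicNorm p q ^ n := by
  induction n with
  | zero => simp [padicNorm.one]
  | succ k ih => rw [pow_succ, pow_succ, padicNorm.mul, ih]

lemma norm_nat_eq_one {k : ℕ} (hk : ¬ p ∣ k) : padicNorm p (k : ℚ) = 1 :=
  (padicNorm.nat_eq_one_iff (p := p) (m := k)).mpr hk

lemma norm_p_pow_div (hp3 : 3 ≤ p) {e : ℕ} (he : 2 ≤ e) :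
    padicNorm p ((p : ℚ) ^ e / e) ≤ ((p:ℚ)⁻¹) ^ 2 := by
  have he0 : e ≠ 0 := by omega
  set v := padicValNat p e with hv
  obtain ⟨w, hw⟩ : p ^ v ∣ e := pow_padicValNat_dvd
  have hw0 : w ≠ 0 := by rintro rfl; simp at hw; omega
  have hpw : ¬ p ∣ w := by
    intro hd
    have : p ^ (v + 1) ∣ e := by
      obtain ⟨c, rfl⟩ := hd
      exact ⟨c, by rw [hw]; ring⟩
    exact pow_succ_padicValNat_not_dvd he0 this
  have hvle : v ≤ e - 2 := padicValNat_le_sub_two hp3 he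
  have hp0 : (p : ℚ) ≠ 0 := by exact_mod_cast hp.out.ne_zero
  have hkey : (p : ℚ) ^ e / e = (p:ℚ) ^ (e - v) / w := by
    have hee : (e : ℚ) = (p:ℚ) ^ v * w := by
      rw [hw]; push_cast; ring
    rw [hee]
    rw [show e = (e - v) + v by omega, pow_add]
    have hw0' : (w : ℚ) ≠ 0 := by exact_mod_cast hw0
    field_simp
    rw [Nat.add_sub_cancel]
  rw [hkey, padicNorm.div, norm_nat_eq_one hpw, div_one]
  rw [padicNorm_pow, padicNorm.padicNorm_p_of_prime]
  have hple : (p:ℚ)⁻¹ ≤ 1 := by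
    rw [inv_le_one_iff₀]
    right
    exact_mod_cast hp.out.one_le
  exact pow_le_pow_of_le_one (by positivity) hple (by omega)


lemma bernoulli_core (hp3 : 3 ≤ p) (n : ℕ) (hn : 1 ≤ n)
    (IH : ∀ j, j < n → padicNorm p (bernoulli j) ≤ p) :
    padicNorm p ((p:ℚ) * bernoulli n - ∑ k ∈ range p, (k:ℚ) ^ n) ≤ (p:ℚ)⁻¹ := by
  have hn1 : ((n : ℚ) + 1) ≠ 0 := by positivity
  have hT := sum_range_pow p n
  rw [Finset.sum_range_succ] at hT
  have hlast : bernoulli n * ((n+1).choose n) * (p:ℚ) ^ (n + 1 - n) / (n+1)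
      = (p:ℚ) * bernoulli n := by
    rw [Nat.choose_succ_self_right, show n + 1 - n = 1 by omega]
    push_cast
    field_simp
  rw [hlast] at hT
  have hdiff : (p:ℚ) * bernoulli n - ∑ k ∈ range p, (k:ℚ) ^ n
      = -∑ j ∈ range n, bernoulli j * ((n+1).choose j) * (p:ℚ) ^ (n + 1 - j) / (n+1) := by
    rw [hT]; ring
  rw [hdiff, padicNorm.neg]
  apply padicNorm.sum_le' _ (by positivity)
  intro j hj
  rw [Finset.mem_range] at hj
  set e := n + 1 - j with he
  have he2 : 2 ≤ e := by omega
  have he0 : ((e : ℚ)) ≠ 0 := by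
    have : 0 < e := by omega
    positivity
  have hterm : bernoulli j * ((n+1).choose j) * (p:ℚ) ^ e / (n+1)
      = bernoulli j * ((n.choose j : ℚ)) * ((p:ℚ) ^ e / e) := by
    have hid : (n.choose j : ℚ) * ((n:ℚ) + 1) = ((n+1).choose j : ℚ) * (e:ℚ) := by
      have h := Nat.choose_mul_succ_eq n j
      rw [he]
      exact_mod_cast h
    field_simp
    linear_combination (-(bernoulli j)) * hid
  rw [hterm, padicNorm.mul, padicNorm.mul]
  have hp0 : (p : ℚ) ≠ 0 := by exact_mod_cast hp.out.ne_zero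
  have hb := IH j hj
  have hc : padicNorm p ((n.choose j : ℚ)) ≤ 1 := padicNorm.of_nat _
  have hd := norm_p_pow_div hp3 he2
  have h1 : padicNorm p (bernoulli j) * padicNorm p ((n.choose j : ℚ)) ≤ (p:ℚ) * 1 :=
    mul_le_mul hb hc (padicNorm.nonneg _) (by positivity)
  have h2 : padicNorm p (bernoulli j) * padicNorm p ((n.choose j : ℚ))
      * padicNorm p ((p:ℚ) ^ e / e) ≤ ((p:ℚ) * 1) * ((p:ℚ)⁻¹) ^ 2 :=
    mul_le_mul h1 hd (padicNorm.nonneg _) (by positivity)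
  calc padicNorm p (bernoulli j) * padicNorm p ((n.choose j : ℚ)) * padicNorm p ((p:ℚ) ^ e / e)
      ≤ ((p:ℚ) * 1) * ((p:ℚ)⁻¹) ^ 2 := h2
    _ = (p:ℚ)⁻¹ := by
        rw [mul_one, sq, ← mul_assoc, mul_inv_cancel₀ hp0, one_mul]

lemma vsc1 (hp3 : 3 ≤ p) : ∀ n : ℕ, padicNorm p (bernoulli n) ≤ p := by
  intro n
  induction n using Nat.strong_induction_on with
  | _ n IH =>
    rcases Nat.eq_zero_or_pos n with rfl | hn
    · rw [bernoulli_zero, padicNorm.one]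
      exact_mod_cast hp.out.one_le
    · have hcore := bernoulli_core hp3 n hn IH
      have hTnorm : padicNorm p (∑ k ∈ range p, (k:ℚ) ^ n) ≤ 1 := by
        have : (∑ k ∈ range p, (k:ℚ) ^ n) = ((∑ k ∈ range p, k ^ n : ℕ) : ℚ) := by
          push_cast; ring
        rw [this]
        exact padicNorm.of_nat _
      have hp0 : (p : ℚ) ≠ 0 := by exact_mod_cast hp.out.ne_zero
      have hp1 : (1:ℚ) ≤ p := by exact_mod_cast hp.out.one_le
      have hmain : padicNorm p ((p:ℚ) * bernoulli n) ≤ 1 := by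
        have := padicNorm.nonarchimedean (p := p)
          (q := (p:ℚ) * bernoulli n - ∑ k ∈ range p, (k:ℚ) ^ n)
          (r := ∑ k ∈ range p, (k:ℚ) ^ n)
        rw [sub_add_cancel] at this
        refine le_trans this (max_le (le_trans hcore ?_) hTnorm)
        rw [inv_le_one_iff₀]
        right; exact hp1
      rw [padicNorm.mul, padicNorm.padicNorm_p_of_prime] at hmain
      have hppos : (0:ℚ) < p := by positivity
      calc padicNorm p (bernoulli n) = (p:ℚ) * ((p:ℚ)⁻¹ * padicNorm p (bernoulli n)) := by
            field_simp
        _ ≤ (p:ℚ) * 1 := by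
            apply mul_le_mul_of_nonneg_left hmain (le_of_lt hppos)
        _ = p := mul_one _

lemma psum_small (n : ℕ) (hn : 0 < n) (hnd : ¬ (p - 1) ∣ n) :
    padicNorm p (∑ k ∈ range p, (k:ℚ) ^ n) ≤ (p:ℚ)⁻¹ := by
  have hcast : (∑ k ∈ range p, (k:ℚ) ^ n) = ((∑ k ∈ range p, k ^ n : ℕ) : ℚ) := by
    push_cast; ring
  set N : ℕ := ∑ k ∈ range p, k ^ n with hN
  have hdvd : p ∣ N := by
    have hz : (N : ZMod p) = 0 := by
      have h1 : (N : ZMod p) = ∑ k ∈ range p, (k : ZMod p) ^ n := by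
        rw [hN]; push_cast; ring
      have h2 : ∑ k ∈ range p, (k : ZMod p) ^ n = ∑ x : ZMod p, x ^ n := by
        haveI : NeZero p := ⟨hp.out.ne_zero⟩
        refine Finset.sum_nbij' (fun k => (k : ZMod p)) (fun x => x.val) ?_ ?_ ?_ ?_ ?_
        · intro a _; exact Finset.mem_univ _
        · intro a _; rw [Finset.mem_range]; exact ZMod.val_lt a
        · intro a ha; rw [Finset.mem_range] at ha; exact ZMod.val_cast_of_lt ha
        · intro a _; exact ZMod.natCast_zmod_val a
        · intro a _; rfl
      have h3 : ∑ x : ZMod p, x ^ n = 0 := by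
        haveI : Fact (1 < p) := ⟨hp.out.one_lt⟩
        classical
        have hunits : ∑ x : ZMod p, x ^ n = ∑ x : (ZMod p)ˣ, ((x : ZMod p)) ^ n := by
          let φ : (ZMod p)ˣ ↪ ZMod p := ⟨fun x => x, Units.val_injective⟩
          have himg : Finset.univ.map φ = Finset.univ \ {(0 : ZMod p)} := by
            ext x
            simp only [Finset.mem_map, Finset.mem_univ, Function.Embedding.coeFn_mk, true_and,
              Finset.mem_sdiff, Finset.mem_singleton, φ]; exact isUnit_iff_ne_zero
          calc ∑ x : ZMod p, x ^ n
              = ∑ x ∈ Finset.univ \ {(0 : ZMod p)}, x ^ n := by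
                rw [← Finset.sum_sdiff (Finset.subset_univ ({0} : Finset (ZMod p))),
                  Finset.sum_singleton, zero_pow (by omega), add_zero]
            _ = ∑ x : (ZMod p)ˣ, ((x : ZMod p)) ^ n := by
                rw [← himg, Finset.sum_map]; rfl
        rw [hunits]
        have := FiniteField.sum_pow_units (ZMod p) n
        rw [ZMod.card] at this
        simp only [this, if_neg hnd]
      rw [h1, h2, h3]
    exact (ZMod.natCast_eq_zero_iff N p).mp hz
  rw [hcast]
  have : ((p:ℤ) ^ 1) ∣ (N : ℤ) := by
    simpa using Int.natCast_dvd_natCast.mpr hdvd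
  have hnorm := (padicNorm.dvd_iff_norm_le (p := p) (n := 1) (z := (N:ℤ))).mp (by exact_mod_cast this)
  simpa using hnorm

lemma vsc2 (hp3 : 3 ≤ p) (n : ℕ) (hnd : ¬ (p - 1) ∣ n) :
    padicNorm p (bernoulli n) ≤ 1 := by
  have hn : 0 < n := by
    rcases Nat.eq_zero_or_pos n with rfl | h
    · exact (hnd (dvd_zero _)).elim
    · exact h
  have hcore := bernoulli_core hp3 n hn (fun j _ => vsc1 hp3 j)
  have hps := psum_small n hn hnd
  have hp0 : (p : ℚ) ≠ 0 := by exact_mod_cast hp.out.ne_zero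
  have hmain : padicNorm p ((p:ℚ) * bernoulli n) ≤ (p:ℚ)⁻¹ := by
    have := padicNorm.nonarchimedean (p := p)
      (q := (p:ℚ) * bernoulli n - ∑ k ∈ range p, (k:ℚ) ^ n)
      (r := ∑ k ∈ range p, (k:ℚ) ^ n)
    rw [sub_add_cancel] at this
    exact le_trans this (max_le hcore hps)
  rw [padicNorm.mul, padicNorm.padicNorm_p_of_prime] at hmain
  have hppos : (0:ℚ) < p := by positivity
  calc padicNorm p (bernoulli n) = (p:ℚ) * ((p:ℚ)⁻¹ * padicNorm p (bernoulli n)) := by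
        field_simp
    _ ≤ (p:ℚ) * (p:ℚ)⁻¹ := mul_le_mul_of_nonneg_left hmain (le_of_lt hppos)
    _ = 1 := mul_inv_cancel₀ hp0

lemma bern_poly_eval (n : ℕ) (x : ℚ) :
    (Polynomial.bernoulli n).eval x
      = ∑ j ∈ range (n + 1), bernoulli j * (n.choose j) * x ^ (n - j) := by
  rw [Polynomial.bernoulli, Polynomial.eval_finset_sum]
  exact Finset.sum_congr rfl fun j _ => by rw [Polynomial.eval_monomial]

lemma bern_eval_neg_nat (n : ℕ) (hodd : Odd n) (t : ℕ) :
    (Polynomial.bernoulli n).eval (-(t:ℚ))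
      = bernoulli n - n * ∑ k ∈ range t, ((k:ℚ) + 1) ^ (n - 1) := by
  induction t with
  | zero => simp [Polynomial.bernoulli_eval_zero]
  | succ t ih =>
    have heven : Even (n - 1) := Nat.Odd.sub_odd hodd odd_one
    have hstep := Polynomial.bernoulli_eval_one_add n (-(t:ℚ) - 1)
    rw [show (1 : ℚ) + (-(t:ℚ) - 1) = -(t:ℚ) by ring] at hstep
    have hpow : (-(t:ℚ) - 1) ^ (n - 1) = ((t:ℚ) + 1) ^ (n - 1) := by
      rw [show (-(t:ℚ) - 1) = -((t:ℚ)+1) by ring, heven.neg_pow]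
    rw [hpow] at hstep
    have : (Polynomial.bernoulli n).eval (-((t:ℕ)+1:ℚ))
        = (Polynomial.bernoulli n).eval (-(t:ℚ)) - n * ((t:ℚ) + 1) ^ (n - 1) := by
      rw [show (-((t:ℕ)+1:ℚ)) = (-(t:ℚ) - 1) by push_cast; ring]
      linarith [hstep]
    push_cast
    rw [this, ih, Finset.sum_range_succ]
    push_cast
    ring

lemma bern_eval_one_add_nat (n : ℕ) (hn : n ≠ 1) (t : ℕ) :
    (Polynomial.bernoulli n).eval ((t:ℚ) + 1)
      = bernoulli n + n * ∑ k ∈ range t, ((k:ℚ) + 1) ^ (n - 1) := by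
  induction t with
  | zero =>
    simp only [Nat.cast_zero, zero_add, range_zero, Finset.sum_empty, mul_zero, add_zero]
    rw [Polynomial.bernoulli_eval_one, bernoulli_eq_bernoulli'_of_ne_one hn]
  | succ t ih =>
    have hstep := Polynomial.bernoulli_eval_one_add n ((t:ℚ) + 1)
    rw [show (1 : ℚ) + ((t:ℚ) + 1) = ((t:ℕ)+1 : ℕ) + 1 by push_cast; ring] at hstep
    rw [hstep, ih, Finset.sum_range_succ]
    push_cast
    ring

lemma bern_poly_half (n : ℕ) (hodd : Odd n) (h1 : 1 < n) :
    (Polynomial.bernoulli n).eval (1/2 : ℚ) = 0 := by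
  have hbz : bernoulli n = 0 := by
    rw [bernoulli_eq_bernoulli'_of_ne_one (by omega)]
    exact bernoulli'_eq_zero_of_odd hodd h1
  set P : Polynomial ℚ :=
    (Polynomial.bernoulli n).comp (1 + Polynomial.X)
      + (Polynomial.bernoulli n).comp (-Polynomial.X) with hP
  have hroot : ∀ t : ℕ, P.eval (t : ℚ) = 0 := by
    intro t
    have h1' : P.eval (t:ℚ) = (Polynomial.bernoulli n).eval ((t:ℚ) + 1)
        + (Polynomial.bernoulli n).eval (-(t:ℚ)) := by
      simp [hP, Polynomial.eval_comp, add_comm]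
    rw [h1', bern_eval_one_add_nat n (by omega) t, bern_eval_neg_nat n hodd t, hbz]
    ring
  have hPzero : P = 0 := by
    apply Polynomial.eq_zero_of_infinite_isRoot
    apply Set.infinite_of_injective_forall_mem
      (f := fun t : ℕ => (t : ℚ)) (Nat.cast_injective)
    intro t
    exact hroot t
  have := congrArg (Polynomial.eval (-(1/2:ℚ))) hPzero
  simp only [hP, Polynomial.eval_add, Polynomial.eval_comp, Polynomial.eval_one,
    Polynomial.eval_X, Polynomial.eval_neg, Polynomial.eval_zero] at this
  rw [show (1 : ℚ) + (-(1/2)) = 1/2 by norm_num, show (-(-(1/2:ℚ))) = 1/2 by norm_num] at this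
  linarith

lemma telescope_sum (m n : ℕ) (c : ℚ) :
    ∑ k ∈ Icc 1 n, (c - 2*(k:ℚ)) ^ m
      = (2 ^ m / (m+1)) * ((Polynomial.bernoulli (m+1)).eval (c/2)
          - (Polynomial.bernoulli (m+1)).eval (c/2 - n)) := by
  have hm1 : ((m:ℚ) + 1) ≠ 0 := by positivity
  have hstep : ∀ k : ℕ, (Polynomial.bernoulli (m+1)).eval (c/2 - (k:ℚ))
      - (Polynomial.bernoulli (m+1)).eval (c/2 - ((k+1 : ℕ):ℚ))
      = ((m:ℚ)+1) * (c/2 - ((k:ℚ)+1)) ^ m := by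
    intro k
    have h := Polynomial.bernoulli_eval_one_add (m+1) (c/2 - ((k:ℚ)+1))
    rw [show (1:ℚ) + (c/2 - ((k:ℚ)+1)) = c/2 - k by ring] at h
    simp only [Nat.add_sub_cancel] at h
    rw [h]
    push_cast
    ring
  have hicc : ∑ k ∈ Icc 1 n, (c - 2*(k:ℚ)) ^ m
      = ∑ k ∈ range n, (c - 2*((1+k : ℕ):ℚ)) ^ m := by
    rw [← Finset.Ico_add_one_right_eq_Icc, Finset.sum_Ico_eq_sum_range]
    simp
  rw [hicc]
  have hterm : ∀ k ∈ range n, (c - 2*((1+k:ℕ):ℚ)) ^ m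
      = (2^m/((m:ℚ)+1)) * ((Polynomial.bernoulli (m+1)).eval (c/2 - (k:ℚ))
          - (Polynomial.bernoulli (m+1)).eval (c/2 - ((k+1:ℕ):ℚ))) := by
    intro k _
    rw [hstep k]
    have h2 : (c - 2*((1+k:ℕ):ℚ)) = 2 * (c/2 - ((k:ℚ)+1)) := by push_cast; ring
    rw [h2, mul_pow]
    field_simp
  rw [Finset.sum_congr rfl hterm, ← Finset.mul_sum]
  rw [Finset.sum_range_sub' (fun k => (Polynomial.bernoulli (m+1)).eval (c/2 - (k:ℚ))) n]
  simp only [Nat.cast_zero, sub_zero]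

lemma norm_half_pow {p : ℕ} [hp : Fact p.Prime] (hp3 : 3 ≤ p) (e : ℕ) :
    padicNorm p (((p:ℚ)/2) ^ e) = ((p:ℚ)⁻¹) ^ e := by
  have h2 : ¬ p ∣ 2 := fun hd => by have := Nat.le_of_dvd (by norm_num) hd; omega
  rw [padicNorm_pow, padicNorm.div, padicNorm.padicNorm_p_of_prime,
    show ((2:ℚ)) = ((2:ℕ):ℚ) by norm_num, norm_nat_eq_one h2, div_one]

/-- `p·B_{i-1} ≡ 2^{-(i-2)}·Σ_{k=1}^{(p-1)/2} (p-2k)^{i-1} (mod p³)`. -/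
theorem lehmer_pB_congruence (p : ℕ) (hp : p.Prime) (hodd : Odd p)
    (i : ℕ) (hipos : 0 < i) (hiodd : Odd i)
    (hcop : Nat.Coprime i p) (hcop1 : Nat.Coprime (i - 1) p) (hcop2 : Nat.Coprime (i - 2) p)
    (h1 : ¬ i ≡ 1 [MOD p - 1]) (h3 : ¬ i ≡ 3 [MOD p - 1]) :
    ratCongr p 3 ((p : ℚ) * bernoulli (i - 1))
      ((1 / 2 ^ (i - 2)) *
        ∑ k ∈ Finset.Icc 1 ((p - 1) / 2),
          (((p : ℤ) - 2 * (k : ℤ) : ℤ) : ℚ) ^ (i - 1)) := by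
  haveI : Fact p.Prime := ⟨hp⟩
  have hpodd : p % 2 = 1 := Nat.odd_iff.mp hodd
  have hp3 : 3 ≤ p := by have := hp.two_le; omega
  have hio : i % 2 = 1 := Nat.odd_iff.mp hiodd
  have hi1 : i ≠ 1 := by
    rintro rfl
    simp only [Nat.sub_self, Nat.coprime_zero_left] at hcop1
    omega
  have hi3 : i ≠ 3 := fun h => h3 (h ▸ Nat.ModEq.refl _)
  have hi5 : 5 ≤ i := by omega
  set m := i - 1 with hm
  have hm4 : 4 ≤ m := by omega
  have hmeven : Even m := Nat.Odd.sub_odd hiodd odd_one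
  have him : i = m + 1 := by omega
  have hme : m % 2 = 0 := Nat.even_iff.mp hmeven
  have hpi : ¬ p ∣ (m + 1) := by
    intro hd
    rw [← him] at hd
    have : p ∣ Nat.gcd i p := Nat.dvd_gcd hd dvd_rfl
    rw [show Nat.gcd i p = 1 from hcop] at this
    have := Nat.le_of_dvd (by norm_num) this
    omega
  have hpm2 : ¬ (p - 1) ∣ (m - 2) := by
    intro hd
    apply h3
    have h3le : 3 ≤ i := by omega
    have : m - 2 = i - 3 := by omega
    rw [this] at hd
    exact ((Nat.modEq_iff_dvd' h3le).mpr hd).symm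
  have hm1 : ((m:ℚ) + 1) ≠ 0 := by positivity
  have hp0 : (p : ℚ) ≠ 0 := by
    have := hp.pos
    positivity
  -- rewrite the sum
  have hi2 : i - 2 = m - 1 := by omega
  have hi1' : i - 1 = m := rfl
  apply ratCongr_of_norm
  have hsum_eq : ∑ k ∈ Finset.Icc 1 ((p - 1) / 2),
        (((p : ℤ) - 2 * (k : ℤ) : ℤ) : ℚ) ^ (i - 1)
      = ∑ k ∈ Finset.Icc 1 ((p-1)/2), ((p:ℚ) - 2*(k:ℚ)) ^ m := by
    apply Finset.sum_congr rfl
    intro k _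
    rw [hi1']
    push_cast
    ring
  rw [hsum_eq, hi2, telescope_sum m ((p-1)/2) (p:ℚ)]
  have hhalf : (p:ℚ)/2 - (((p-1)/2 : ℕ):ℚ) = 1/2 := by
    have : ((2*((p-1)/2)+1 : ℕ) : ℚ) = ((p:ℕ):ℚ) := by
      exact_mod_cast congrArg (Nat.cast (R := ℚ)) (show 2*((p-1)/2)+1 = p by omega)
    push_cast at this
    linarith
  have hoddm1 : Odd (m + 1) := by
    rw [← him]; exact hiodd
  rw [hhalf, bern_poly_half (m+1) hoddm1 (by omega), sub_zero]
  -- key algebraic identity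
  have hmem : m ∈ Finset.range (m+2) := Finset.mem_range.mpr (by omega)
  have h2m : (2:ℚ) ^ m = 2 * 2 ^ (m-1) := by
    rw [← pow_succ']
    congr 1
    omega
  have key : (p:ℚ) * bernoulli m
        - (1 / 2 ^ (m-1)) * ((2 ^ m / (m+1)) * (Polynomial.bernoulli (m+1)).eval ((p:ℚ)/2))
      = -(2/((m:ℚ)+1)) * ∑ j ∈ (Finset.range (m+2)).erase m,
          bernoulli j * ((m+1).choose j : ℚ) * ((p:ℚ)/2) ^ (m+1-j) := by
    rw [bern_poly_eval (m+1) ((p:ℚ)/2)]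
    rw [← Finset.sum_erase_add (Finset.range (m+2)) _ hmem]
    have hfm : bernoulli m * (((m+1).choose m : ℕ) : ℚ) * ((p:ℚ)/2) ^ (m+1-m)
        = bernoulli m * ((m:ℚ)+1) * ((p:ℚ)/2) := by
      rw [Nat.choose_succ_self_right, show m+1-m = 1 by omega]
      push_cast
      ring
    rw [hfm, h2m]
    have h2m0 : (2:ℚ) ^ (m-1) ≠ 0 := by positivity
    field_simp
    ring
  rw [key, padicNorm.mul]
  have hnorm_coeff : padicNorm p (-(2/((m:ℚ)+1))) = 1 := by
    rw [padicNorm.neg, padicNorm.div]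
    have hn2 : padicNorm p (2:ℚ) = 1 := by
      rw [show ((2:ℚ)) = ((2:ℕ):ℚ) by norm_num]
      exact norm_nat_eq_one (fun hd => by have := Nat.le_of_dvd (by norm_num) hd; omega)
    have hnm : padicNorm p ((m:ℚ)+1) = 1 := by
      rw [show ((m:ℚ)+1) = (((m+1:ℕ)):ℚ) by push_cast; ring]
      exact norm_nat_eq_one hpi
    rw [hn2, hnm]
    norm_num
  rw [hnorm_coeff, one_mul]
  apply padicNorm.sum_le' _ (by positivity)
  intro j hj
  rw [Finset.mem_erase, Finset.mem_range] at hj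
  obtain ⟨hjm, hjlt⟩ := hj
  by_cases hj1 : j = m + 1
  · subst hj1
    have : bernoulli (m+1) = 0 := by
      rw [bernoulli_eq_bernoulli'_of_ne_one (by omega)]
      exact bernoulli'_eq_zero_of_odd hoddm1 (by omega)
    rw [this]
    simp only [zero_mul, padicNorm.zero]
    positivity
  by_cases hj2 : j = m - 1
  · subst hj2
    have hoddm : Odd (m-1) := Nat.Even.sub_odd (by omega) hmeven odd_one
    have : bernoulli (m-1) = 0 := by
      rw [bernoulli_eq_bernoulli'_of_ne_one (by omega)]
      exact bernoulli'_eq_zero_of_odd hoddm (by omega)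
    rw [this]
    simp only [zero_mul, padicNorm.zero]
    positivity
  rw [padicNorm.mul, padicNorm.mul, norm_half_pow hp3]
  have hcle : padicNorm p (((m+1).choose j : ℕ) : ℚ) ≤ 1 := padicNorm.of_nat _
  have hinv1 : (p:ℚ)⁻¹ ≤ 1 := by
    rw [inv_le_one_iff₀]
    right
    exact_mod_cast hp.one_le
  by_cases hj3 : j = m - 2
  · subst hj3
    have hb : padicNorm p (bernoulli (m-2)) ≤ 1 := vsc2 hp3 (m-2) hpm2
    have he3 : m + 1 - (m-2) = 3 := by omega
    rw [he3]
    calc padicNorm p (bernoulli (m-2)) * padicNorm p (((m+1).choose (m-2) : ℕ) : ℚ)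
          * ((p:ℚ)⁻¹) ^ 3
        ≤ 1 * 1 * ((p:ℚ)⁻¹) ^ 3 := by
          apply mul_le_mul _ le_rfl (by positivity) (by norm_num)
          exact mul_le_mul hb hcle (padicNorm.nonneg _) (by norm_num)
      _ = ((p:ℚ)⁻¹) ^ 3 := by ring
  · -- j ≤ m - 3, exponent ≥ 4
    have he4 : 4 ≤ m + 1 - j := by omega
    set e := m + 1 - j with he
    have hb : padicNorm p (bernoulli j) ≤ p := vsc1 hp3 j
    calc padicNorm p (bernoulli j) * padicNorm p (((m+1).choose j : ℕ) : ℚ) * ((p:ℚ)⁻¹) ^ e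
        ≤ (p:ℚ) * 1 * ((p:ℚ)⁻¹) ^ e := by
          apply mul_le_mul _ le_rfl (by positivity) (by positivity)
          exact mul_le_mul hb hcle (padicNorm.nonneg _) (by positivity)
      _ = ((p:ℚ)⁻¹) ^ (e - 1) := by
          rw [show e = (e-1) + 1 by omega, pow_succ, mul_one]
          field_simp
          rw [Nat.add_sub_cancel]
      _ ≤ ((p:ℚ)⁻¹) ^ 3 := pow_le_pow_of_le_one (by positivity) hinv1 (by omega)
end
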